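/- arXiv:1610.09711 — 3 statements merged into one kernel-verified Lean document; each statement's English description precedes it below -/
import Mathlib

section
/- Let K be an algebraically closed field, let n and m be natural numbers, and let M : Fin m → Matrix (Fin n) (Fin n) K be a family of matrices that pairwise commute. Then there exists a function μ : Fin n → Fin m → K (a simultaneous enumeration of eigenvalues) such that: (1) for every i : Fin m, the multiset of roots of the characteristic polynomial of M i equals the multiset {μ k i : k ∈ Fin n} (with multiplicity), and (2) the multiset of roots of the characteristic polynomial of the product ∏ i, M i (taken in the order of Fin m) equals the multiset {∏ i, μ k i : k ∈ Fin n} (with multiplicity). In particular, every eigenvalue of the product of pairwise commuting matrices is a product of eigenvalues of the factors, matched consistently. -/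
/-!
Commuting endomorphisms of a finite-dimensional space over an algebraically closed field are
simultaneously triangularizable: a common eigenvector of the dual maps is a functional whose
kernel is a common invariant hyperplane, so one triangularizes on the hyperplane and appends a
last basis vector outside it. In a common triangular basis the eigenvalues of each factor are
the diagonal entries, and the diagonal of a product of upper triangular matrices is the
product of the diagonals.
-/

open Polynomial Module

namespace Module.Basis

variable {R M : Type*} [CommRing R] [AddCommGroup M] [Module R M] {n : ℕ} {N : Submodule R M}
  (b : Basis (Fin n) R N) (y : M) (hli : ∀ (c : R), ∀ x ∈ N, c • y + x = 0 → c = 0)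
  (hsp : ∀ z : M, ∃ c : R, z + c • y ∈ N)

theorem mkFinSnoc_repr_coe (x : N) :
    ⇑((mkFinSnoc b y hli hsp).repr x) = Fin.snoc (α := fun _ => R) (b.repr x) 0 := by
  rw [← (mkFinSnoc b y hli hsp).repr_sum_self (Fin.snoc (α := fun _ => R) (b.repr x) 0),
    Fin.sum_univ_castSucc]
  simp only [coe_mkFinSnoc, Fin.snoc_castSucc, Fin.snoc_last, zero_smul, add_zero,
    Function.comp_apply, ← Submodule.coe_smul, ← Submodule.coe_sum, b.sum_repr]

theorem isUpperTriangular_toMatrix_mkFinSnoc {f : End R M} (hf : Set.MapsTo f N N)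
    (htri : (LinearMap.toMatrix b b (f.restrict hf)).IsUpperTriangular) :
    (LinearMap.toMatrix (mkFinSnoc b y hli hsp) (mkFinSnoc b y hli hsp) f).IsUpperTriangular := by
  intro k j hjk
  obtain ⟨j, rfl⟩ := Fin.exists_castSucc_eq.mpr (Fin.ne_last_of_lt hjk)
  have hfj : f (mkFinSnoc b y hli hsp j.castSucc) = (f.restrict hf (b j) : M) := by
    rw [coe_mkFinSnoc, Fin.snoc_castSucc]
    rfl
  rw [LinearMap.toMatrix_apply, hfj, mkFinSnoc_repr_coe]
  induction k using Fin.lastCases with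
  | last => simp
  | cast k =>
    simpa [LinearMap.toMatrix_apply] using htri (Fin.castSucc_lt_castSucc_iff.mp hjk)

end Module.Basis

namespace Module.End

variable {K V : Type*} [Field K] [IsAlgClosed K] [AddCommGroup V] [Module K V]
  [FiniteDimensional K V]

theorem exists_common_eigenvector [Nontrivial V] {ι : Type*} (f : ι → End K V)
    (hf : ∀ i j, Commute (f i) (f j)) :
    ∃ (χ : ι → K) (v : V), v ≠ 0 ∧ ∀ i, f i v = χ i • v := by
  induction hd : finrank K V using Nat.strong_induction_on generalizing V with
  | _ d ih =>
  by_cases hscalar : ∀ i, ∃ c : K, ∀ v, f i v = c • v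
  · choose χ hχ using hscalar
    obtain ⟨v, hv⟩ := exists_ne (0 : V)
    exact ⟨χ, v, hv, fun i => hχ i v⟩
  push Not at hscalar
  obtain ⟨i, hi⟩ := hscalar
  obtain ⟨c, hc⟩ := (f i).exists_eigenvalue
  have hproper : (f i).eigenspace c ≠ ⊤ := fun h => by
    obtain ⟨v, hv⟩ := hi c
    exact hv (mem_eigenspace_iff.mp (h ▸ Submodule.mem_top))
  have : Nontrivial ((f i).eigenspace c) := Submodule.nontrivial_iff_ne_bot.mpr hc
  have hmaps j : Set.MapsTo (f j) ((f i).eigenspace c) ((f i).eigenspace c) :=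
    mapsTo_genEigenspace_of_comm (hf i j) c 1
  obtain ⟨χ, v, hv, hχ⟩ := ih _ (hd ▸ Submodule.finrank_lt hproper)
    (fun j => (f j).restrict (hmaps j)) (fun j k => LinearMap.restrict_commute (hf j k) _ _) rfl
  exact ⟨χ, v, by simpa using hv, fun j => congrArg Subtype.val (hχ j)⟩

theorem exists_basis_isUpperTriangular_toMatrix {ι : Type*} (f : ι → End K V)
    (hf : ∀ i j, Commute (f i) (f j)) {n : ℕ} (hn : finrank K V = n) :
    ∃ b : Basis (Fin n) K V, ∀ i, (LinearMap.toMatrix b b (f i)).IsUpperTriangular := by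
  induction n generalizing V with
  | zero => exact ⟨finBasisOfFinrankEq K V hn, fun i k => k.elim0⟩
  | succ n ih =>
    have : Nontrivial V := nontrivial_of_finrank_eq_succ hn
    have hdual i j : Commute (f i).dualMap (f j).dualMap := by
      change (f i).dualMap ∘ₗ (f j).dualMap = (f j).dualMap ∘ₗ (f i).dualMap
      rw [LinearMap.dualMap_comp_dualMap, LinearMap.dualMap_comp_dualMap, ← mul_eq_comp,
        ← mul_eq_comp, (hf j i).eq]
    obtain ⟨χ, φ, hφ, hφχ⟩ := exists_common_eigenvector (fun i => (f i).dualMap) hdual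
    have hmaps i : Set.MapsTo (f i) (LinearMap.ker φ) (LinearMap.ker φ) := fun x hx => by
      rw [SetLike.mem_coe, LinearMap.mem_ker] at hx ⊢
      simpa [hx] using congrArg (· x) (hφχ i)
    obtain ⟨c, hc⟩ := ih (fun i => (f i).restrict (hmaps i))
      (fun i j => LinearMap.restrict_commute (hf i j) _ _)
      (by have := Module.Dual.finrank_ker_add_one_of_ne_zero hφ; omega)
    obtain ⟨y, hy⟩ : ∃ y, φ y ≠ 0 := by
      by_contra! h
      exact hφ (LinearMap.ext h)
    refine ⟨Basis.mkFinSnoc c y ?_ ?_,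
      fun i => Basis.isUpperTriangular_toMatrix_mkFinSnoc _ _ _ _ _ (hc i)⟩
    · intro a x hx h
      rw [LinearMap.mem_ker] at hx
      simpa [hx, hy] using congrArg φ h
    · intro z
      refine ⟨-(φ z / φ y), ?_⟩
      simp [field]

end Module.End

namespace Matrix

variable {n R : Type*} [Fintype n] [LinearOrder n]

theorem IsUpperTriangular.diag_mul [NonUnitalNonAssocSemiring R] {A B : Matrix n n R}
    (hA : A.IsUpperTriangular) (hB : B.IsUpperTriangular) : (A * B).diag = A.diag * B.diag := by
  ext k
  refine (Finset.sum_eq_single k (fun l _ hlk => ?_) (by simp)).trans rfl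
  change A k l * B l k = 0
  rcases hlk.lt_or_gt with h | h
  · rw [hA h, zero_mul]
  · rw [hB h, mul_zero]

variable [DecidableEq n]

theorem isUpperTriangular_list_prod [Semiring R] {L : List (Matrix n n R)}
    (hL : ∀ A ∈ L, A.IsUpperTriangular) : L.prod.IsUpperTriangular :=
  list_prod_mem (S := blockTriangularSubsemiring R id) hL

theorem diag_list_prod_of_isUpperTriangular [Semiring R] {L : List (Matrix n n R)}
    (hL : ∀ A ∈ L, A.IsUpperTriangular) : L.prod.diag = (L.map diag).prod := by
  induction L with
  | nil => exact diag_one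
  | cons A L ih =>
    have hL' := fun B hB => hL B (List.mem_cons_of_mem A hB)
    rw [List.prod_cons, (hL A List.mem_cons_self).diag_mul (isUpperTriangular_list_prod hL'),
      ih hL', List.map_cons, List.prod_cons]

theorem IsUpperTriangular.roots_charpoly [CommRing R] [IsDomain R] {A : Matrix n n R}
    (hA : A.IsUpperTriangular) :
    A.charpoly.roots = (Finset.univ.val : Multiset n).map A.diag := by
  rw [charpoly_of_isUpperTriangular A hA, Finset.prod_eq_multiset_prod,
    ← roots_multiset_prod_X_sub_C (Finset.univ.val.map A.diag), Multiset.map_map]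
  rfl

end Matrix

/-- For a pairwise commuting family of matrices over an algebraically closed field,
there is a simultaneous enumeration `μ` of the eigenvalues: for each `i`, the multiset
of roots of the characteristic polynomial of `M i` is `{μ k i : k}`, and the multiset of
roots of the characteristic polynomial of `∏ i, M i` is `{∏ i, μ k i : k}`. -/
theorem eigenvalues_of_commuting_product
    (K : Type*) [Field K] [IsAlgClosed K] (n m : ℕ)
    (M : Fin m → Matrix (Fin n) (Fin n) K)
    (hcomm : ∀ i j, M i * M j = M j * M i) :
    ∃ μ : Fin n → Fin m → K,
      (∀ i : Fin m,
        (M i).charpoly.roots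
          = (Finset.univ.val : Multiset (Fin n)).map (fun k => μ k i)) ∧
      (List.ofFn M).prod.charpoly.roots
        = (Finset.univ.val : Multiset (Fin n)).map (fun k => ∏ i, μ k i) := by
  obtain ⟨b, hb⟩ := End.exists_basis_isUpperTriangular_toMatrix
    (fun i => Matrix.toLinAlgEquiv' (M i))
    (fun i j => by simp only [Commute, SemiconjBy, ← map_mul, hcomm i j]) (finrank_fin_fun K)
  let T := Matrix.toLinAlgEquiv'.trans (LinearMap.toMatrixAlgEquiv b)
  have hT A : (T A).charpoly = A.charpoly :=
    (LinearMap.charpoly_toMatrix _ b).trans (Matrix.charpoly_toLin' A)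
  have hTM i : (T (M i)).IsUpperTriangular := hb i
  have hTri : ∀ A ∈ List.ofFn (T ∘ M), A.IsUpperTriangular := List.forall_mem_ofFn_iff.mpr hTM
  refine ⟨fun k i => T (M i) k k, fun i => ?_, ?_⟩
  · rw [← hT, (hTM i).roots_charpoly]
    rfl
  · rw [← hT, map_list_prod, List.map_ofFn,
      (Matrix.isUpperTriangular_list_prod hTri).roots_charpoly,
      Matrix.diag_list_prod_of_isUpperTriangular hTri, List.map_ofFn, List.prod_ofFn]
    congr 1
    ext k
    exact Finset.prod_apply ..
end

section
/- Let K be an algebraically closed field which is also a normed field (so the norm is multiplicative), let n and m be natural numbers, let s be a real number with 0 < s, and let M : Fin m → Matrix (Fin n) (Fin n) K be a family of matrices that pairwise commute. Assume: (1) for every i and every root λ of the characteristic polynomial of M i, one has ‖λ‖ ≤ 1; and (2) every root λ of the characteristic polynomial of the product ∏ i, M i satisfies s ≤ ‖λ‖. Then for every i, every root λ of the characteristic polynomial of M i satisfies s ≤ ‖λ‖. -/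
/-!
Let `λ` be an eigenvalue of `M i`. The matrices `M j` commute, so they preserve the
`λ`-eigenspace of `M i` and have a common eigenvector `v` in it, say `M j v = μ j • v`.
Then `v` is an eigenvector of the product with eigenvalue `∏ j, μ j`, whence
`s ≤ ‖∏ j, μ j‖ ≤ ‖μ i‖ = ‖λ‖` because every other factor has norm at most `1`.
-/

open Polynomial Module End

theorem Module.End.exists_common_eigenvector_of_commute {K V ι : Type*} [Field K]
    [IsAlgClosed K] [AddCommGroup V] [Module K V] [FiniteDimensional K V] (f : ι → End K V)
    (hf : ∀ j k, Commute (f j) (f k)) (s : Finset ι) {p : Submodule K V} (hp : p ≠ ⊥)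
    (hmaps : ∀ j, Set.MapsTo (f j) p p) :
    ∃ v ∈ p, v ≠ 0 ∧ ∀ j ∈ s, ∃ μ : K, f j v = μ • v := by
  classical
  induction s using Finset.induction_on generalizing p with
  | empty =>
    obtain ⟨v, hv, hv0⟩ := p.ne_bot_iff.mp hp
    exact ⟨v, hv, hv0, by simp⟩
  | insert a s _ ih =>
    have : Nontrivial p := Submodule.nontrivial_iff_ne_bot.mpr hp
    obtain ⟨μ, hμ⟩ := exists_eigenvalue ((f a).restrict (hmaps a))
    obtain ⟨w, hw⟩ := hμ.exists_hasEigenvector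
    have hw_eig : f a w = μ • (w : V) := congr_arg Subtype.val hw.apply_eq_smul
    have hp' : p ⊓ (f a).eigenspace μ ≠ ⊥ :=
      (Submodule.ne_bot_iff _).mpr ⟨w, ⟨w.2, mem_eigenspace_iff.mpr hw_eig⟩,
        fun h => hw.2 (Subtype.ext h)⟩
    obtain ⟨v, ⟨hvp, hva⟩, hv0, hv⟩ := ih hp' fun j =>
      (hmaps j).inter_inter (mapsTo_genEigenspace_of_comm (hf a j) μ 1)
    exact ⟨v, hvp, hv0,
      (Finset.forall_mem_insert _ _ _).mpr ⟨⟨μ, mem_eigenspace_iff.mp hva⟩, hv⟩⟩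

theorem Module.End.ofFn_prod_apply_of_forall_apply_eq_smul {R M : Type*} [CommSemiring R]
    [AddCommMonoid M] [Module R M] {m : ℕ} (f : Fin m → End R M) (μ : Fin m → R) {v : M}
    (h : ∀ j, f j v = μ j • v) : (List.ofFn f).prod v = (∏ j, μ j) • v := by
  induction m with
  | zero => simp
  | succ m ih =>
    rw [List.ofFn_succ, List.prod_cons, mul_apply, ih _ _ fun j => h j.succ, map_smul, h 0,
      smul_smul, Fin.prod_univ_succ, mul_comm]

theorem norm_prod_le_norm_of_norm_le_one {R ι : Type*} [NormedCommRing R] [NormOneClass R]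
    [Fintype ι] (μ : ι → R) (h : ∀ j, ‖μ j‖ ≤ 1) (i : ι) : ‖∏ j, μ j‖ ≤ ‖μ i‖ := by
  classical
  have h_rest : ‖∏ j ∈ Finset.univ.erase i, μ j‖ ≤ 1 :=
    (Finset.norm_prod_le _ _).trans
      (Finset.prod_le_one (fun j _ => norm_nonneg _) fun j _ => h j)
  calc ‖∏ j, μ j‖ = ‖μ i * ∏ j ∈ Finset.univ.erase i, μ j‖ := by
        rw [Finset.mul_prod_erase _ _ (Finset.mem_univ i)]
    _ ≤ ‖μ i‖ * ‖∏ j ∈ Finset.univ.erase i, μ j‖ := norm_mul_le _ _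
    _ ≤ ‖μ i‖ := mul_le_of_le_one_right (norm_nonneg _) h_rest

theorem Matrix.mem_roots_charpoly_iff_hasEigenvalue {K n : Type*} [Field K] [Fintype n]
    [DecidableEq n] (A : Matrix n n K) (μ : K) :
    μ ∈ A.charpoly.roots ↔ HasEigenvalue A.toLin' μ := by
  rw [mem_roots A.charpoly_monic.ne_zero, hasEigenvalue_iff_isRoot_charpoly,
    Matrix.charpoly_toLin']

theorem Matrix.toLin'_list_prod {R n : Type*} [CommSemiring R] [Fintype n] [DecidableEq n]
    (l : List (Matrix n n R)) : l.prod.toLin' = (l.map Matrix.toLin').prod :=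
  map_list_prod Matrix.toLinAlgEquiv' l

theorem slopes_of_commuting_factors_general
    (K : Type*) [NormedField K] [IsAlgClosed K] (n m : ℕ) (s : ℝ)
    (M : Fin m → Matrix (Fin n) (Fin n) K)
    (hcomm : ∀ i j, M i * M j = M j * M i)
    (hle : ∀ i : Fin m, ∀ lam ∈ (M i).charpoly.roots, ‖lam‖ ≤ 1)
    (hprod : ∀ lam ∈ (List.ofFn M).prod.charpoly.roots, s ≤ ‖lam‖) :
    ∀ i : Fin m, ∀ lam ∈ (M i).charpoly.roots, s ≤ ‖lam‖ := by
  intro i lam hlam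
  set f : Fin m → End K (Fin n → K) := fun j => (M j).toLin'
  have hf : ∀ j k, Commute (f j) (f k) := fun j k =>
    Commute.map (hcomm j k) Matrix.toLinAlgEquiv'
  obtain ⟨v, hv_lam, hv0, hv⟩ := exists_common_eigenvector_of_commute f hf Finset.univ
    ((Matrix.mem_roots_charpoly_iff_hasEigenvalue _ _).mp hlam)
    fun j => mapsTo_genEigenspace_of_comm (hf i j) lam 1
  choose μ hμ using fun j => hv j (Finset.mem_univ j)
  have hμ_le : ∀ j, ‖μ j‖ ≤ 1 := fun j => hle j _ <|
    (Matrix.mem_roots_charpoly_iff_hasEigenvalue _ _).mpr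
      (hasEigenvalue_of_hasEigenvector ⟨mem_eigenspace_iff.mpr (hμ j), hv0⟩)
  have hμ_i : μ i = lam :=
    smul_left_injective K hv0 ((hμ i).symm.trans (mem_eigenspace_iff.mp hv_lam))
  have hprod_eig : (List.ofFn M).prod.toLin' v = (∏ j, μ j) • v := by
    rw [Matrix.toLin'_list_prod, List.map_ofFn]
    exact ofFn_prod_apply_of_forall_apply_eq_smul f μ hμ
  calc s ≤ ‖∏ j, μ j‖ := hprod _ <| (Matrix.mem_roots_charpoly_iff_hasEigenvalue _ _).mpr
        (hasEigenvalue_of_hasEigenvector ⟨mem_eigenspace_iff.mpr hprod_eig, hv0⟩)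
    _ ≤ ‖lam‖ := hμ_i ▸ norm_prod_le_norm_of_norm_le_one μ hμ_le i

/-- If pairwise commuting matrices over an algebraically closed normed field all have
eigenvalues of norm at most `1`, and every eigenvalue of their product has norm at
least `s`, then every eigenvalue of each factor has norm at least `s`. -/
theorem slopes_of_commuting_factors
    (K : Type*) [NormedField K] [IsAlgClosed K] (n m : ℕ) (s : ℝ) (hs : 0 < s)
    (M : Fin m → Matrix (Fin n) (Fin n) K)
    (hcomm : ∀ i j, M i * M j = M j * M i)
    (hle : ∀ i : Fin m, ∀ lam ∈ (M i).charpoly.roots, ‖lam‖ ≤ 1)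
    (hprod : ∀ lam ∈ (List.ofFn M).prod.charpoly.roots, s ≤ ‖lam‖) :
    ∀ i : Fin m, ∀ lam ∈ (M i).charpoly.roots, s ≤ ‖lam‖ :=
  slopes_of_commuting_factors_general K n m s M hcomm hle hprod
end

section
/- (Bol's identity.) Let a, b, c, d ∈ ℂ with a·d − b·c ≠ 0, let k ≥ 2 be a natural number, let f : ℂ → ℂ be differentiable on all of ℂ (entire), and let z ∈ ℂ with c·z + d ≠ 0. Then the (k−1)-st iterated derivative at z of the function w ↦ (c·w + d)^(k−2) · f((a·w + b)/(c·w + d)) equals (a·d − b·c)^(k−1) · (c·z + d)^(−k) · (iteratedDeriv (k−1) f)((a·z + b)/(c·z + d)). -/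
/-!
Put `γ w = (aw + b)/(cw + d)` and `w₀ = γ z`, and write
`f(w₀ + t) = ∑_{i ≤ q} pᵢ tⁱ + t^{q+1} G(t)` with `G(0) = f^{(q+1)}(w₀)/(q+1)!`.
Since `γ w - γ z = (ad - bc)(w - z)/((cw + d)(cz + d))`, the function `(cw + d)^q f(γ w)` is,
near `z`, a polynomial of degree `q` in `w` plus `(w - z)^{q+1} V(w)` with `V` analytic and
`V(z) = (ad - bc)^{q+1} (cz + d)^{-(q+2)} G(0)`. The `(q+1)`-st derivative at `z` kills the
polynomial and extracts `(q+1)! V(z)` from the rest.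
-/

open Filter Topology Finset

section

variable {𝕜 : Type*} [NontriviallyNormedField 𝕜]

theorem mobius_sub_mobius {a b c d w z : 𝕜} (hw : c * w + d ≠ 0) (hz : c * z + d ≠ 0) :
    (a * w + b) / (c * w + d) - (a * z + b) / (c * z + d)
      = (a * d - b * c) * (w - z) / ((c * w + d) * (c * z + d)) := by
  rw [div_sub_div _ _ hw hz]
  ring

theorem iteratedDeriv_sub_pow_mul {n m : ℕ} {v : 𝕜 → 𝕜} {z₀ : 𝕜}
    (hv : ContDiffAt 𝕜 n v z₀) :
    iteratedDeriv n (fun w => (w - z₀) ^ m * v w) z₀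
      = n.descFactorial m * iteratedDeriv (n - m) v z₀ := by
  have hpow (i : ℕ) :
      iteratedDeriv i (fun w => (w - z₀) ^ m) z₀ = if i = m then (m.factorial : 𝕜) else 0 := by
    simp only [iteratedDeriv_comp_sub_const (f := (· ^ m)), sub_self, iteratedDeriv_fun_pow_zero,
      Nat.cast_ite, Nat.cast_zero]
  rw [iteratedDeriv_fun_mul (by fun_prop) hv]
  simp only [hpow, mul_ite, ite_mul, mul_zero, zero_mul, sum_ite_eq', mem_range]
  split_ifs with hm
  · rw [Nat.descFactorial_eq_factorial_mul_choose]
    push_cast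
    ring
  · rw [Nat.descFactorial_eq_zero_iff_lt.mpr (by omega), Nat.cast_zero, zero_mul]

theorem iteratedDeriv_affine_pow_eq_zero_of_lt {e n : ℕ} (h : e < n) (c d x : 𝕜) :
    iteratedDeriv n (fun w => (c * w + d) ^ e) x = 0 := by
  induction e generalizing n with
  | zero => simp [iteratedDeriv_const, Nat.pos_iff_ne_zero.mp h]
  | succ e ih =>
    obtain ⟨n, rfl⟩ := Nat.exists_eq_add_of_lt h
    have hderiv :
        deriv (fun w => (c * w + d) ^ (e + 1)) = fun w => ((e + 1) * c) * (c * w + d) ^ e := by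
      ext w
      have := (((hasDerivAt_id w).const_mul c).add_const d).fun_pow (e + 1)
      simp only [id_eq, mul_one, add_tsub_cancel_right, Nat.cast_add, Nat.cast_one] at this
      rw [this.deriv]
      ring
    rw [show e + 1 + n + 1 = (e + n + 1) + 1 by omega, iteratedDeriv_succ', hderiv,
      iteratedDeriv_const_mul_field, ih (by omega), mul_zero]

theorem AnalyticAt.exists_eq_sum_add_sub_pow_mul [CharZero 𝕜] [CompleteSpace 𝕜]
    {f : 𝕜 → 𝕜} {w₀ : 𝕜} (hf : AnalyticAt 𝕜 f w₀) (n : ℕ) :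
    ∃ G : 𝕜 → 𝕜, AnalyticAt 𝕜 G w₀ ∧ G w₀ = iteratedDeriv n f w₀ / n.factorial ∧
      ∀ w, f w = ∑ i ∈ range n, iteratedDeriv i f w₀ / i.factorial * (w - w₀) ^ i
        + (w - w₀) ^ n * G w := by
  have hshift : AnalyticAt 𝕜 (fun t => f (t + w₀)) 0 :=
    hf.comp_of_eq (by fun_prop) (zero_add w₀)
  obtain ⟨F, hF, hfF⟩ := hshift.exists_eq_sum_add_pow_mul (n + 1)
  refine ⟨fun w => iteratedDeriv n f w₀ / n.factorial + (w - w₀) * F (w - w₀),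
    ?_, by simp, fun w => ?_⟩
  · have hFshift : AnalyticAt 𝕜 (fun w => F (w - w₀)) w₀ :=
      hF.comp_of_eq (by fun_prop) (sub_self w₀)
    exact analyticAt_const.add ((analyticAt_id.sub analyticAt_const).mul hFshift)
  · have hexp := hfF (w - w₀)
    simp only [sub_add_cancel, iteratedDeriv_comp_add_const, zero_add, smul_eq_mul,
      sum_range_succ] at hexp
    rw [hexp, sum_congr rfl fun i _ => by rw [div_mul_comm]]
    ring

theorem affine_pow_mul_comp_mobius_eventuallyEq {a b c d z : 𝕜} (hz : c * z + d ≠ 0) {q : ℕ}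
    {f G : 𝕜 → 𝕜} {p : ℕ → 𝕜} (hG : AnalyticAt 𝕜 G ((a * z + b) / (c * z + d)))
    (hf : ∀ w, f w = ∑ i ∈ range (q + 1), p i * (w - (a * z + b) / (c * z + d)) ^ i
      + (w - (a * z + b) / (c * z + d)) ^ (q + 1) * G w) :
    ∃ V : 𝕜 → 𝕜, AnalyticAt 𝕜 V z ∧
      V z = ((a * d - b * c) / (c * z + d)) ^ (q + 1) * ((c * z + d)⁻¹
        * G ((a * z + b) / (c * z + d))) ∧
      (fun w => (c * w + d) ^ q * f ((a * w + b) / (c * w + d))) =ᶠ[𝓝 z] fun w =>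
        ∑ i ∈ range (q + 1),
            p i * ((a * d - b * c) / (c * z + d)) ^ i * ((w - z) ^ i * (c * w + d) ^ (q - i))
          + (w - z) ^ (q + 1) * V w := by
  have hmobius : AnalyticAt 𝕜 (fun w => (a * w + b) / (c * w + d)) z := by
    fun_prop (disch := exact hz)
  have hGφ := hG.comp_of_eq hmobius rfl
  refine ⟨fun w => ((a * d - b * c) / (c * z + d)) ^ (q + 1)
      * ((c * w + d)⁻¹ * G ((a * w + b) / (c * w + d))),
    by fun_prop (disch := exact hz), rfl, ?_⟩
  have hcont : ContinuousAt (fun w => c * w + d) z := by fun_prop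
  filter_upwards [hcont.eventually_ne hz] with w hw
  have hdiff : (a * w + b) / (c * w + d) - (a * z + b) / (c * z + d)
      = (a * d - b * c) / (c * z + d) * (w - z) * (c * w + d)⁻¹ := by
    rw [mobius_sub_mobius hw hz]
    field_simp
  rw [hf, hdiff, mul_add, mul_sum]
  generalize (a * d - b * c) / (c * z + d) = r
  generalize hu : c * w + d = u at hw ⊢
  congr 1
  · refine sum_congr rfl fun i hi => ?_
    have hsplit : u ^ q = u ^ (q - i) * u ^ i := by
      rw [← pow_add, Nat.sub_add_cancel (Nat.lt_succ_iff.mp (mem_range.mp hi))]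
    rw [hsplit, mul_pow, mul_pow, inv_pow]
    field_simp
  · rw [mul_pow, mul_pow, inv_pow, pow_succ u]
    field_simp

theorem iteratedDeriv_affine_pow_mul_comp_mobius [CharZero 𝕜] [CompleteSpace 𝕜]
    {a b c d z : 𝕜} (hz : c * z + d ≠ 0) (q : ℕ) {f : 𝕜 → 𝕜}
    (hf : AnalyticAt 𝕜 f ((a * z + b) / (c * z + d))) :
    iteratedDeriv (q + 1) (fun w => (c * w + d) ^ q * f ((a * w + b) / (c * w + d))) z
      = (a * d - b * c) ^ (q + 1) * ((c * z + d) ^ (q + 2))⁻¹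
        * iteratedDeriv (q + 1) f ((a * z + b) / (c * z + d)) := by
  obtain ⟨G, hG, hG₀, hfG⟩ := hf.exists_eq_sum_add_sub_pow_mul (q + 1)
  obtain ⟨V, hV, hVz, hfV⟩ := affine_pow_mul_comp_mobius_eventuallyEq hz hG hfG
  have hVdiff := hV.contDiffAt (n := q + 1)
  have hpoly : ∀ i ∈ range (q + 1), iteratedDeriv (q + 1) (fun w =>
      iteratedDeriv i f ((a * z + b) / (c * z + d)) / i.factorial
        * ((a * d - b * c) / (c * z + d)) ^ i * ((w - z) ^ i * (c * w + d) ^ (q - i))) z = 0 := by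
    intro i hi
    rw [iteratedDeriv_const_mul_field, iteratedDeriv_sub_pow_mul (by fun_prop),
      iteratedDeriv_affine_pow_eq_zero_of_lt (by have := mem_range.mp hi; omega), mul_zero,
      mul_zero]
  rw [hfV.iteratedDeriv_eq, iteratedDeriv_fun_add (by fun_prop) (by fun_prop),
    iteratedDeriv_fun_sum (by fun_prop), sum_eq_zero hpoly, zero_add,
    iteratedDeriv_sub_pow_mul hVdiff, Nat.descFactorial_self, Nat.sub_self, iteratedDeriv_zero,
    hVz, hG₀]
  generalize iteratedDeriv (q + 1) f ((a * z + b) / (c * z + d)) = D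
  have hfac : ((q + 1).factorial : 𝕜) ≠ 0 := Nat.cast_ne_zero.mpr (Nat.factorial_ne_zero _)
  rw [div_pow]
  field_simp
  ring

end

theorem bol_identity_general
    (a b c d : ℂ) (k : ℕ) (hk : 2 ≤ k)
    (f : ℂ → ℂ) (hf : Differentiable ℂ f)
    (z : ℂ) (hz : c * z + d ≠ 0) :
    iteratedDeriv (k - 1)
        (fun w => (c * w + d) ^ (k - 2) * f ((a * w + b) / (c * w + d))) z
      = (a * d - b * c) ^ (k - 1) * (c * z + d) ^ (-(k : ℤ)) *
          iteratedDeriv (k - 1) f ((a * z + b) / (c * z + d)) := by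
  obtain ⟨q, rfl⟩ : ∃ q, k = q + 2 := ⟨k - 2, by omega⟩
  rw [show q + 2 - 1 = q + 1 by omega, Nat.add_sub_cancel,
    iteratedDeriv_affine_pow_mul_comp_mobius hz q (hf.analyticAt _), zpow_neg, zpow_natCast]

/-- **Bol's identity.** Differentiating `k-1` times intertwines the weight-`k` slash
action and the weight-`(2-k)` slash action: for an entire `f` and `ad - bc ≠ 0`,
`∂^{k-1}_z [(cz+d)^{k-2} f((az+b)/(cz+d))]
  = (ad-bc)^{k-1} (cz+d)^{-k} (∂^{k-1} f)((az+b)/(cz+d))`. -/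
theorem bol_identity
    (a b c d : ℂ) (hdet : a * d - b * c ≠ 0) (k : ℕ) (hk : 2 ≤ k)
    (f : ℂ → ℂ) (hf : Differentiable ℂ f)
    (z : ℂ) (hz : c * z + d ≠ 0) :
    iteratedDeriv (k - 1)
        (fun w => (c * w + d) ^ (k - 2) * f ((a * w + b) / (c * w + d))) z
      = (a * d - b * c) ^ (k - 1) * (c * z + d) ^ (-(k : ℤ)) *
          iteratedDeriv (k - 1) f ((a * z + b) / (c * z + d)) :=
  bol_identity_general a b c d k hk f hf z hz
end
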